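/- In a chain of n triangles with unit bottom-edge weights and detour lengths 1 + η_i, increasing the published weight of bottom edge {u_{i-1},u_i} from 1 to 1 + η_i for exactly the indices i ∈ S makes the minimum attack cost equal to ∑_{i∈S} ν_i and increases the shortest published s–t distance by exactly ∑_{i∈S} η_i. -/

import Mathlib

open SimpleGraph

/-- Length of a walk with respect to edge weights `w`. -/
noncomputable def walkLen {V : Type*} {G : SimpleGraph V} (w : Sym2 V → ℝ) {s t : V}
    (p : G.Walk s t) : ℝ := (p.edges.map w).sum

/-- Vertices of the chain-of-triangles gadget: `Sum.inl i` is `u_i`, `Sum.inr i` is `ω_{i+1}`. -/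
abbrev CV (n : ℕ) := Fin (n + 1) ⊕ Fin n

/-- The bottom edge `{u_{i-1}, u_i}` of the `i`-th triangle (on the target path). -/
def botE (n : ℕ) (i : Fin n) : Sym2 (CV n) := s(Sum.inl i.castSucc, Sum.inl i.succ)

/-- The detour edge `{u_{i-1}, ω_i}` of the `i`-th triangle. -/
def d1E (n : ℕ) (i : Fin n) : Sym2 (CV n) := s(Sum.inl i.castSucc, Sum.inr i)

/-- The detour edge `{ω_i, u_i}` of the `i`-th triangle. -/
def d2E (n : ℕ) (i : Fin n) : Sym2 (CV n) := s(Sum.inr i, Sum.inl i.succ)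

/-- The chain-of-triangles gadget graph. -/
def chainGraph (n : ℕ) : SimpleGraph (CV n) :=
  SimpleGraph.fromEdgeSet {e | ∃ i : Fin n, e = botE n i ∨ e = d1E n i ∨ e = d2E n i}

/-- Source `s = u_0`. -/
def src (n : ℕ) : CV n := Sum.inl 0

/-- Destination `t = u_n`. -/
def dst (n : ℕ) : CV n := Sum.inl (Fin.last n)

/-- An attack on the chain gadget: removable edges lie in the graph, no bottom edge
(edge of `p*`) is removed, and afterwards every simple `s`–`t` path other than the bottom
path `p*` (i.e. any path visiting some detour vertex `ω_i`) is strictly longer than `p*`. -/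
def IsChainAttack (n : ℕ) (w' : Sym2 (CV n) → ℝ) (E' : Finset (Sym2 (CV n))) : Prop :=
  ↑E' ⊆ (chainGraph n).edgeSet ∧ (∀ i : Fin n, botE n i ∉ E') ∧
    ∀ q : ((chainGraph n).deleteEdges ↑E').Walk (src n) (dst n), q.IsPath →
      (∃ i : Fin n, Sum.inr i ∈ q.support) →
      ∑ i : Fin n, w' (botE n i) < walkLen w' q

/-! The potential `chainPot` (prefix sums of the bottom weights, with `ω_i` placed one
`{u_{i-1}, ω_i}`-edge above `u_{i-1}`) is feasible for `w'`, so no `s`–`t` walk is shorter than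
the bottom path, of length `n + ∑_{i∈S} η_i`. For `i ∈ S` the detour through `ω_i` is exactly as
long as the bottom edge, so an attack must cut one of its two edges, of cost `ν_i` each. Cutting
`{u_{i-1}, ω_i}` for all `i ∈ S` suffices: a simple path through `ω_i` with `i ∉ S` then uses
`{ω_i, u_i}`, which has slack `η_i > 0` with respect to the potential. -/

section WalkLength

variable {V : Type*} {G H : SimpleGraph V} (w : Sym2 V → ℝ)

@[simp]
theorem walkLen_nil {u : V} : walkLen w (Walk.nil : G.Walk u u) = 0 := by
  simp [walkLen]

@[simp]
theorem walkLen_cons {u v x : V} (h : G.Adj u v) (p : G.Walk v x) :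
    walkLen w (p.cons h) = w s(u, v) + walkLen w p := by
  simp [walkLen]

theorem walkLen_append {u v x : V} (p : G.Walk u v) (q : G.Walk v x) :
    walkLen w (p.append q) = walkLen w p + walkLen w q := by
  simp [walkLen]

@[simp]
theorem walkLen_mapLe (hGH : G ≤ H) {u v : V} (p : G.Walk u v) :
    walkLen w (p.mapLe hGH) = walkLen w p := by
  simp [walkLen]

@[simp]
theorem walkLen_transfer {u v : V} (p : G.Walk u v) (hp : ∀ e ∈ p.edges, e ∈ H.edgeSet) :
    walkLen w (p.transfer H hp) = walkLen w p := by
  simp [walkLen, Walk.edges_transfer]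

variable {w} {φ : V → ℝ}

theorem sub_le_walkLen (hφ : ∀ x y, G.Adj x y → φ y - φ x ≤ w s(x, y)) {u v : V}
    (p : G.Walk u v) : φ v - φ u ≤ walkLen w p := by
  induction p with
  | nil => simp
  | cons h p ih => rw [walkLen_cons]; linarith [hφ _ _ h]

theorem sub_add_le_walkLen (hφ : ∀ x y, G.Adj x y → φ y - φ x ≤ w s(x, y)) {e : Sym2 V}
    {δ : ℝ} (he : ∀ x y, s(x, y) = e → φ y - φ x + δ ≤ w s(x, y)) {u v : V}
    (p : G.Walk u v) (hp : e ∈ p.edges) : φ v - φ u + δ ≤ walkLen w p := by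
  induction p with
  | nil => simp at hp
  | cons h p ih =>
    rw [walkLen_cons]
    rw [Walk.edges_cons, List.mem_cons] at hp
    rcases hp with rfl | hp
    · linarith [he _ _ rfl, sub_le_walkLen hφ p]
    · linarith [hφ _ _ h, ih hp]

end WalkLength

namespace SimpleGraph.Walk

variable {V : Type*} {G : SimpleGraph V}

theorem IsTrail.exists_mem_edges_ne {u v x : V} {p : G.Walk u v} (hp : p.IsTrail)
    (hx : x ∈ p.support) (hxu : x ≠ u) (hxv : x ≠ v) :
    ∃ e₁ ∈ p.edges, ∃ e₂ ∈ p.edges, e₁ ≠ e₂ ∧ x ∈ e₁ ∧ x ∈ e₂ := by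
  classical
  have hnil₁ : ¬(p.takeUntil x hx).Nil := not_nil_of_ne hxu.symm
  have hnil₂ : ¬(p.dropUntil x hx).Nil := not_nil_of_ne hxv
  have he₁ := mk_penultimate_end_mem_edges hnil₁
  have he₂ := mk_start_snd_mem_edges hnil₂
  refine ⟨_, p.edges_takeUntil_subset_edges hx he₁, _, p.edges_dropUntil_subset_edges hx he₂,
    fun h => hp.disjoint_edges_takeUntil_dropUntil hx he₁ (h ▸ he₂), Sym2.mem_mk_right _ _,
    Sym2.mem_mk_left _ _⟩

theorem le_of_mem_support_of_forall_darts_lt {β : Type*} [Preorder β] {r : V → β} {u v x : V}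
    (p : G.Walk u v) (hp : ∀ d ∈ p.darts, r d.fst < r d.snd) (hx : x ∈ p.support) :
    r u ≤ r x := by
  induction p with
  | nil => rw [support_nil, List.mem_singleton] at hx; rw [hx]
  | cons h p ih =>
    rw [darts_cons, List.forall_mem_cons] at hp
    rw [support_cons, List.mem_cons] at hx
    rcases hx with rfl | hx
    · exact le_rfl
    · exact hp.1.le.trans (ih hp.2 hx)

theorem isPath_of_forall_darts_lt {β : Type*} [Preorder β] {r : V → β} {u v : V}
    (p : G.Walk u v) (hp : ∀ d ∈ p.darts, r d.fst < r d.snd) : p.IsPath := by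
  induction p with
  | nil => exact .nil
  | cons h p ih =>
    rw [darts_cons, List.forall_mem_cons] at hp
    refine (cons_isPath_iff _ _).2 ⟨ih hp.2, fun hu => ?_⟩
    exact (hp.1.trans_le (le_of_mem_support_of_forall_darts_lt p hp.2 hu)).false

end SimpleGraph.Walk

theorem sum_le_sum_of_forall_mem_or_mem {ι α M : Type*} [DecidableEq α] [AddCommMonoid M]
    [PartialOrder M] [IsOrderedAddMonoid M] {S : Finset ι} {E : Finset α} {a b : ι → α}
    {c : α → M} {ν : ι → M} (ha : a.Injective) (hb : b.Injective) (hab : ∀ i j, a i ≠ b j)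
    (hca : ∀ i, c (a i) = ν i) (hcb : ∀ i, c (b i) = ν i) (hc : ∀ e ∈ E, 0 ≤ c e)
    (hE : ∀ i ∈ S, a i ∈ E ∨ b i ∈ E) : ∑ i ∈ S, ν i ≤ ∑ e ∈ E, c e := by
  classical
  set f : ι → α := fun i => if a i ∈ E then a i else b i
  have hfE : ∀ i ∈ S, f i ∈ E := fun i hi => by
    by_cases h : a i ∈ E
    · simp only [f, if_pos h, h]
    · simpa only [f, if_neg h, h, false_or] using hE i hi
  have hcf : ∀ i, c (f i) = ν i := fun i => by
    by_cases h : a i ∈ E <;> simp only [f, h, if_true, if_false, hca, hcb]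
  have hf : Set.InjOn f S := fun i _ j _ hij => by
    by_cases hi : a i ∈ E <;> by_cases hj : a j ∈ E <;>
      simp only [f, hi, hj, if_true, if_false] at hij
    exacts [ha hij, absurd hij (hab i j), absurd hij.symm (hab j i), hb hij]
  calc ∑ i ∈ S, ν i = ∑ e ∈ S.image f, c e := by
        rw [Finset.sum_image hf]; exact Finset.sum_congr rfl fun i _ => (hcf i).symm
    _ ≤ ∑ e ∈ E, c e :=
        Finset.sum_le_sum_of_subset_of_nonneg (Finset.image_subset_iff.2 hfE) fun e he _ => hc e he

section ChainGraph

variable {n : ℕ}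

theorem botE_ne_d1E (i j : Fin n) : botE n i ≠ d1E n j := by
  simp [botE, d1E]

theorem d1E_ne_d2E (i j : Fin n) : d1E n i ≠ d2E n j := by
  simp only [d1E, d2E, ne_eq, Sym2.eq_iff, reduceCtorEq, false_and, Sum.inl.injEq,
    Sum.inr.injEq, false_or]
  rintro ⟨h, rfl⟩
  exact Fin.castSucc_lt_succ.ne h

theorem d1E_injective : (d1E n).Injective := fun i j h => by
  simpa [d1E] using h

theorem d2E_injective : (d2E n).Injective := fun i j h => by
  simpa [d2E] using h

theorem mem_edgeSet_chainGraph {e : Sym2 (CV n)} :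
    e ∈ (chainGraph n).edgeSet ↔ ∃ i, e = botE n i ∨ e = d1E n i ∨ e = d2E n i := by
  rw [chainGraph, edgeSet_fromEdgeSet, Set.mem_sdiff, Set.mem_ofPred_eq, and_iff_left_iff_imp]
  rintro ⟨i, rfl | rfl | rfl⟩ <;> simp [botE, d1E, d2E, Fin.ext_iff]

theorem chainGraph_adj {x y : CV n} :
    (chainGraph n).Adj x y ↔ ∃ i, s(x, y) = botE n i ∨ s(x, y) = d1E n i ∨ s(x, y) = d2E n i := by
  rw [← mem_edgeSet, mem_edgeSet_chainGraph]

theorem chainGraph_adj_botE (i : Fin n) : (chainGraph n).Adj (.inl i.castSucc) (.inl i.succ) :=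
  chainGraph_adj.2 ⟨i, .inl rfl⟩

theorem chainGraph_adj_d1E (i : Fin n) : (chainGraph n).Adj (.inl i.castSucc) (.inr i) :=
  chainGraph_adj.2 ⟨i, .inr (.inl rfl)⟩

theorem chainGraph_adj_d2E (i : Fin n) : (chainGraph n).Adj (.inr i) (.inl i.succ) :=
  chainGraph_adj.2 ⟨i, .inr (.inr rfl)⟩

theorem eq_d1E_or_eq_d2E_of_inr_mem {e : Sym2 (CV n)} (he : e ∈ (chainGraph n).edgeSet)
    {i : Fin n} (hi : .inr i ∈ e) : e = d1E n i ∨ e = d2E n i := by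
  obtain ⟨j, rfl | rfl | rfl⟩ := mem_edgeSet_chainGraph.1 he <;>
    simp_all [botE, d1E, d2E]

end ChainGraph

section ChainPotential

variable {n : ℕ} (w : Sym2 (CV n) → ℝ)

noncomputable def chainPot : CV n → ℝ
  | .inl k => ∑ j : Fin n with j.castSucc < k, w (botE n j)
  | .inr i => ∑ j : Fin n with j.castSucc < i.castSucc, w (botE n j) + w (d1E n i)

theorem chainPot_inr (i : Fin n) :
    chainPot w (.inr i) = chainPot w (.inl i.castSucc) + w (d1E n i) := rfl

theorem chainPot_inl_succ (i : Fin n) :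
    chainPot w (.inl i.succ) = chainPot w (.inl i.castSucc) + w (botE n i) := by
  have : Finset.univ.filter (· ≤ i) = insert i (Finset.univ.filter (· < i)) := by
    ext j; simp [le_iff_lt_or_eq, or_comm]
  simp only [chainPot, Fin.castSucc_lt_succ_iff, Fin.castSucc_lt_castSucc_iff]
  rw [this, Finset.sum_insert (by simp), add_comm]

theorem chainPot_src : chainPot w (src n) = 0 := by
  simp [chainPot, src]

theorem chainPot_dst : chainPot w (dst n) = ∑ i, w (botE n i) := by
  simp [chainPot, dst, Fin.castSucc_lt_last]

variable {w}

theorem chainPot_sub_add_le_of_eq_d2E {i : Fin n} {x y : CV n} (h : s(x, y) = d2E n i) :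
    chainPot w y - chainPot w x + (w (d2E n i) - |w (botE n i) - w (d1E n i)|) ≤ w s(x, y) := by
  rw [h]
  rcases Sym2.eq_iff.1 h with ⟨rfl, rfl⟩ | ⟨rfl, rfl⟩ <;>
    simp only [chainPot_inl_succ, chainPot_inr] <;>
    linarith [le_abs_self (w (botE n i) - w (d1E n i)), neg_abs_le (w (botE n i) - w (d1E n i))]

theorem chainPot_sub_le (hbot : ∀ i, 0 ≤ w (botE n i)) (hd1 : ∀ i, 0 ≤ w (d1E n i))
    (htri : ∀ i, |w (botE n i) - w (d1E n i)| ≤ w (d2E n i)) {x y : CV n}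
    (hxy : (chainGraph n).Adj x y) : chainPot w y - chainPot w x ≤ w s(x, y) := by
  obtain ⟨i, h | h | h⟩ := chainGraph_adj.1 hxy
  · rw [h]
    rcases Sym2.eq_iff.1 h with ⟨rfl, rfl⟩ | ⟨rfl, rfl⟩ <;>
      simp only [chainPot_inl_succ] <;> linarith [hbot i]
  · rw [h]
    rcases Sym2.eq_iff.1 h with ⟨rfl, rfl⟩ | ⟨rfl, rfl⟩ <;>
      simp only [chainPot_inr] <;> linarith [hd1 i]
  · linarith [chainPot_sub_add_le_of_eq_d2E (w := w) h, htri i]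

end ChainPotential

section ChainWalk

variable {n : ℕ} (D : Finset (Fin n))

def stepWalk (i : Fin n) : (chainGraph n).Walk (.inl i.castSucc) (.inl i.succ) :=
  if i ∈ D then .cons (chainGraph_adj_d1E i) (.cons (chainGraph_adj_d2E i) .nil)
  else .cons (chainGraph_adj_botE i) .nil

def chainWalk (k : Fin (n + 1)) : (chainGraph n).Walk (src n) (.inl k) :=
  Fin.induction (motive := fun k => (chainGraph n).Walk (src n) (.inl k)) .nil
    (fun i p => p.append (stepWalk D i)) k

theorem chainWalk_zero : chainWalk D 0 = .nil := rfl

theorem chainWalk_succ (i : Fin n) :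
    chainWalk D i.succ = (chainWalk D i.castSucc).append (stepWalk D i) := rfl

theorem mem_darts_chainWalk {k : Fin (n + 1)} {d : (chainGraph n).Dart} :
    d ∈ (chainWalk D k).darts ↔ ∃ i : Fin n, i.castSucc < k ∧ d ∈ (stepWalk D i).darts := by
  induction k using Fin.induction with
  | zero => simp only [chainWalk_zero, Fin.not_lt_zero, false_and, exists_false, iff_false]; nofun
  | succ k ih =>
    rw [chainWalk_succ, Walk.darts_append, List.mem_append, ih]
    simp only [Fin.castSucc_lt_succ_iff, Fin.castSucc_lt_castSucc_iff, le_iff_lt_or_eq]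
    constructor
    · rintro (⟨i, hi, hd⟩ | hd)
      exacts [⟨i, .inl hi, hd⟩, ⟨k, .inr rfl, hd⟩]
    · rintro ⟨i, hi | rfl, hd⟩
      exacts [.inl ⟨i, hi, hd⟩, .inr hd]

theorem chainWalk_isPath (k : Fin (n + 1)) : (chainWalk D k).IsPath := by
  refine (chainWalk D k).isPath_of_forall_darts_lt
    (r := Sum.elim (fun k : Fin (n + 1) => 2 * (k : ℕ)) fun i : Fin n => 2 * (i : ℕ) + 1)
    fun d hd => ?_
  obtain ⟨i, -, hd⟩ := (mem_darts_chainWalk D).1 hd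
  unfold stepWalk at hd
  split_ifs at hd <;>
    simp only [Walk.darts_cons, Walk.darts_nil, List.mem_cons, List.not_mem_nil, or_false] at hd
  · rcases hd with rfl | rfl
    · simp
    · simp; omega
  · simp [hd]

theorem mem_edges_chainWalk {k : Fin (n + 1)} {e : Sym2 (CV n)} (he : e ∈ (chainWalk D k).edges) :
    (∃ j, e = botE n j) ∨ ∃ j ∈ D, e = d1E n j ∨ e = d2E n j := by
  obtain ⟨d, hd, rfl⟩ := List.mem_map.1 he
  obtain ⟨j, -, hd⟩ := (mem_darts_chainWalk D).1 hd
  unfold stepWalk at hd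
  split_ifs at hd with hj
  · simp only [Walk.darts_cons, Walk.darts_nil, List.mem_cons, List.not_mem_nil, or_false] at hd
    rcases hd with rfl | rfl
    exacts [.inr ⟨j, hj, .inl rfl⟩, .inr ⟨j, hj, .inr rfl⟩]
  · simp only [Walk.darts_cons, Walk.darts_nil, List.mem_cons, List.not_mem_nil, or_false] at hd
    exact .inl ⟨j, by rw [hd]; rfl⟩

def chainPath : (chainGraph n).Walk (src n) (dst n) := chainWalk D (.last n)

theorem chainPath_isPath : (chainPath D).IsPath := chainWalk_isPath D _

theorem inr_mem_support_chainPath {i : Fin n} (hi : i ∈ D) :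
    .inr i ∈ (chainPath D).support := by
  refine Walk.dart_snd_mem_support_of_mem_darts _ (d := ⟨(_, _), chainGraph_adj_d1E i⟩) ?_
  exact (mem_darts_chainWalk D).2 ⟨i, Fin.castSucc_lt_last i, by simp [stepWalk, hi]⟩

variable {D} {w : Sym2 (CV n) → ℝ}

theorem walkLen_stepWalk {i : Fin n} (hi : i ∈ D → w (d1E n i) + w (d2E n i) = w (botE n i)) :
    walkLen w (stepWalk D i) = w (botE n i) := by
  unfold stepWalk
  split_ifs with h
  · simp only [walkLen_cons, walkLen_nil, add_zero]
    exact hi h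
  · simp [botE]

theorem walkLen_chainWalk (hD : ∀ i ∈ D, w (d1E n i) + w (d2E n i) = w (botE n i))
    (k : Fin (n + 1)) : walkLen w (chainWalk D k) = chainPot w (.inl k) := by
  induction k using Fin.induction with
  | zero =>
    show walkLen w (Walk.nil : (chainGraph n).Walk (src n) (src n)) = chainPot w (src n)
    rw [walkLen_nil, chainPot_src]
  | succ k ih => rw [chainWalk_succ, walkLen_append, ih, walkLen_stepWalk (hD k), chainPot_inl_succ]

theorem walkLen_chainPath (hD : ∀ i ∈ D, w (d1E n i) + w (d2E n i) = w (botE n i)) :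
    walkLen w (chainPath D) = ∑ i, w (botE n i) :=
  (walkLen_chainWalk hD _).trans (chainPot_dst w)

end ChainWalk

section Attack

variable {n : ℕ} {w : Sym2 (CV n) → ℝ}

theorem SimpleGraph.Walk.IsTrail.d1E_mem_edges_and_d2E_mem_edges
    {q : (chainGraph n).Walk (src n) (dst n)} (hq : q.IsTrail) {i : Fin n}
    (hi : .inr i ∈ q.support) : d1E n i ∈ q.edges ∧ d2E n i ∈ q.edges := by
  obtain ⟨e₁, he₁, e₂, he₂, hne, hi₁, hi₂⟩ :=
    hq.exists_mem_edges_ne hi (by simp [src]) (by simp [dst])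
  rcases eq_d1E_or_eq_d2E_of_inr_mem (q.edges_subset_edgeSet he₁) hi₁ with rfl | rfl <;>
    rcases eq_d1E_or_eq_d2E_of_inr_mem (q.edges_subset_edgeSet he₂) hi₂ with rfl | rfl
  exacts [(hne rfl).elim, ⟨he₁, he₂⟩, ⟨he₂, he₁⟩, (hne rfl).elim]

theorem IsChainAttack.d1E_mem_or_d2E_mem {E' : Finset (Sym2 (CV n))} (hE : IsChainAttack n w E')
    {i : Fin n} (hi : w (d1E n i) + w (d2E n i) = w (botE n i)) : d1E n i ∈ E' ∨ d2E n i ∈ E' := by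
  obtain ⟨-, hbot, hlong⟩ := hE
  by_contra! h
  have hq : ∀ e ∈ (chainPath {i}).edges,
      e ∈ ((chainGraph n).deleteEdges E').edgeSet := by
    intro e he
    rw [edgeSet_deleteEdges]
    refine ⟨Walk.edges_subset_edgeSet _ he, ?_⟩
    rcases mem_edges_chainWalk _ he with ⟨j, rfl⟩ | ⟨j, hj, rfl | rfl⟩
    · exact hbot j
    · obtain rfl := Finset.mem_singleton.1 hj; exact h.1
    · obtain rfl := Finset.mem_singleton.1 hj; exact h.2
  have hlt := hlong _ ((chainPath_isPath _).transfer hq) ⟨i, by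
    rw [Walk.support_transfer]; exact inr_mem_support_chainPath _ (Finset.mem_singleton_self i)⟩
  rw [walkLen_transfer, walkLen_chainPath (by simpa using hi)] at hlt
  exact hlt.false

theorem IsChainAttack.sum_le_sum {E' : Finset (Sym2 (CV n))} (hE : IsChainAttack n w E')
    {S : Finset (Fin n)} {c : Sym2 (CV n) → ℝ} {ν : Fin n → ℝ}
    (hS : ∀ i ∈ S, w (d1E n i) + w (d2E n i) = w (botE n i)) (hν : ∀ i, 0 ≤ ν i)
    (hc1 : ∀ i, c (d1E n i) = ν i) (hc2 : ∀ i, c (d2E n i) = ν i) :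
    ∑ i ∈ S, ν i ≤ ∑ e ∈ E', c e := by
  refine sum_le_sum_of_forall_mem_or_mem d1E_injective d2E_injective d1E_ne_d2E hc1 hc2
    (fun e he => ?_) fun i hi => hE.d1E_mem_or_d2E_mem (hS i hi)
  obtain ⟨i, rfl | rfl | rfl⟩ := mem_edgeSet_chainGraph.1 (hE.1 he)
  exacts [(hE.2.1 i he).elim, hc1 i ▸ hν i, hc2 i ▸ hν i]

theorem isChainAttack_image_d1E (S : Finset (Fin n)) (hbot : ∀ i, 0 ≤ w (botE n i))
    (hd1 : ∀ i, 0 ≤ w (d1E n i)) (htri : ∀ i, |w (botE n i) - w (d1E n i)| ≤ w (d2E n i))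
    (hslack : ∀ i ∉ S, |w (botE n i) - w (d1E n i)| < w (d2E n i)) :
    IsChainAttack n w (S.image (d1E n)) := by
  classical
  refine ⟨?_, fun i hi => ?_, fun q hq ⟨i, hi⟩ => ?_⟩
  · simp only [Finset.coe_image, Set.image_subset_iff]
    exact fun i _ => mem_edgeSet_chainGraph.2 ⟨i, .inr (.inl rfl)⟩
  · obtain ⟨j, -, hj⟩ := Finset.mem_image.1 hi
    exact botE_ne_d1E i j hj.symm
  let q' := q.mapLe (deleteEdges_le _)
  obtain ⟨hd1q, hd2q⟩ := (hq.isTrail.mapLe _).d1E_mem_edges_and_d2E_mem_edges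
    (q := q') (by rwa [Walk.support_mapLe_eq_support])
  have hiS : i ∉ S := fun hiS => by
    rw [Walk.edges_mapLe_eq_edges] at hd1q
    have := q.edges_subset_edgeSet hd1q
    rw [edgeSet_deleteEdges] at this
    exact this.2 (Finset.mem_coe.2 (Finset.mem_image_of_mem _ hiS))
  have hlen := sub_add_le_walkLen (fun x y h => chainPot_sub_le hbot hd1 htri h)
    (fun x y h => chainPot_sub_add_le_of_eq_d2E h) q' hd2q
  rw [walkLen_mapLe, chainPot_src, chainPot_dst] at hlen
  linarith [hslack i hiS]

end Attack

theorem stmt18_general (n : ℕ) (η ν : Fin n → ℝ) (hη : ∀ i, 0 < η i) (hν : ∀ i, 0 < ν i)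
    (w' c : Sym2 (CV n) → ℝ)
    (hc1 : ∀ i, c (d1E n i) = ν i) (hc2 : ∀ i, c (d2E n i) = ν i)
    (S : Finset (Fin n))
    (hw'bot : ∀ i, w' (botE n i) = if i ∈ S then 1 + η i else 1)
    (hw'd1 : ∀ i, w' (d1E n i) = 1) (hw'd2 : ∀ i, w' (d2E n i) = η i) :
    ((∃ E', IsChainAttack n w' E' ∧ ∑ e ∈ E', c e = ∑ i ∈ S, ν i) ∧
      ∀ E', IsChainAttack n w' E' → ∑ i ∈ S, ν i ≤ ∑ e ∈ E', c e) ∧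
    ((∃ q : (chainGraph n).Walk (src n) (dst n), q.IsPath ∧
        walkLen w' q = n + ∑ i ∈ S, η i) ∧
      ∀ q : (chainGraph n).Walk (src n) (dst n), q.IsPath →
        n + ∑ i ∈ S, η i ≤ walkLen w' q) := by
  have hbot : ∀ i, 0 ≤ w' (botE n i) := fun i => by
    rw [hw'bot]; split_ifs <;> linarith [hη i]
  have hd1 : ∀ i, 0 ≤ w' (d1E n i) := fun i => hw'd1 i ▸ zero_le_one
  have htri : ∀ i, |w' (botE n i) - w' (d1E n i)| ≤ w' (d2E n i) := fun i => by
    rw [hw'bot, hw'd1, hw'd2]; split_ifs <;> simp [abs_of_pos (hη i), (hη i).le]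
  have hslack : ∀ i ∉ S, |w' (botE n i) - w' (d1E n i)| < w' (d2E n i) := fun i hi => by
    rw [hw'bot, if_neg hi, hw'd1, hw'd2]; simpa using hη i
  have htight : ∀ i ∈ S, w' (d1E n i) + w' (d2E n i) = w' (botE n i) := fun i hi => by
    rw [hw'd1, hw'd2, hw'bot, if_pos hi]
  have htotal : ∑ i, w' (botE n i) = n + ∑ i ∈ S, η i := by
    have h : ∀ i, w' (botE n i) = 1 + if i ∈ S then η i else 0 := fun i => by
      rw [hw'bot]; split_ifs <;> ring
    simp [h, Finset.sum_add_distrib, Finset.sum_ite_mem]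
  refine ⟨⟨⟨S.image (d1E n), isChainAttack_image_d1E S hbot hd1 htri hslack, ?_⟩,
      fun E' hE => hE.sum_le_sum htight (fun i => (hν i).le) hc1 hc2⟩,
    ⟨chainPath ∅, chainPath_isPath ∅, by rw [walkLen_chainPath (by simp), htotal]⟩,
    fun q _ => ?_⟩
  · rw [Finset.sum_image fun i _ j _ h => d1E_injective h]
    exact Finset.sum_congr rfl fun i _ => hc1 i
  · have := sub_le_walkLen (fun x y h => chainPot_sub_le hbot hd1 htri h) q
    rwa [chainPot_src, chainPot_dst, sub_zero, htotal] at this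

/-- In the chain gadget (bottom edges of true weight 1, detour through `ω_i` of true length
`1 + η_i`, detour edges of removal cost `ν_i`), publishing weights that raise the bottom
edge `{u_{i-1},u_i}` from `1` to `1 + η_i` exactly for `i ∈ S` makes the minimum attack
cost equal to `∑_{i∈S} ν_i`, and makes the shortest published `s`–`t` distance exactly
`n + ∑_{i∈S} η_i` (an increase of exactly `∑_{i∈S} η_i`). -/
theorem stmt18 (n : ℕ) (η ν : Fin n → ℝ) (hη : ∀ i, 0 < η i) (hν : ∀ i, 0 < ν i)
    (w w' c : Sym2 (CV n) → ℝ)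
    (hwbot : ∀ i, w (botE n i) = 1) (hwd1 : ∀ i, w (d1E n i) = 1)
    (hwd2 : ∀ i, w (d2E n i) = η i)
    (hc1 : ∀ i, c (d1E n i) = ν i) (hc2 : ∀ i, c (d2E n i) = ν i)
    (S : Finset (Fin n))
    (hw'bot : ∀ i, w' (botE n i) = if i ∈ S then 1 + η i else 1)
    (hw'd1 : ∀ i, w' (d1E n i) = 1) (hw'd2 : ∀ i, w' (d2E n i) = η i) :
    ((∃ E', IsChainAttack n w' E' ∧ ∑ e ∈ E', c e = ∑ i ∈ S, ν i) ∧
      ∀ E', IsChainAttack n w' E' → ∑ i ∈ S, ν i ≤ ∑ e ∈ E', c e) ∧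
    ((∃ q : (chainGraph n).Walk (src n) (dst n), q.IsPath ∧
        walkLen w' q = n + ∑ i ∈ S, η i) ∧
      ∀ q : (chainGraph n).Walk (src n) (dst n), q.IsPath →
        n + ∑ i ∈ S, η i ≤ walkLen w' q) :=
  stmt18_general n η ν hη hν w' c hc1 hc2 S hw'bot hw'd1 hw'd2
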